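/- arXiv:2102.01212 — 2 statements merged into one kernel-verified Lean document; each statement's English description precedes it below -/
import Mathlib

section
/- Let k, p ≥ 1 and r ≥ 1 be natural numbers. Let M_xx be a symmetric invertible k×k real matrix, M_xz a k×p real matrix, and set M_zx := M_xzᵀ. Let M_zz be a symmetric p×p real matrix, M_xd a k×r real matrix, M_zd a p×r real matrix, and A a symmetric p×p real matrix. Assume the Schur complement S := M_zz − M_zx · M_xx⁻¹ · M_xz is invertible. Suppose a 1×k real row vector λ_x, a 1×p real row vector λ_z, and a p×1 real column vector γ satisfy the three first-order conditions: (i) λ_x · M_xd + λ_z · M_zd = 0; (ii) λ_x · M_xx + λ_z · M_zx = 0; (iii) 2·γᵀ·A = λ_x · M_xz + λ_z · M_zz. Then δᵀ · A · γ = 0, where δ := S⁻¹ · (M_zd − M_zx · M_xx⁻¹ · M_xd). -/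
open Matrix

/-- First-stage representation of the IVQR estimator: the Lagrangian first-order
conditions imply the orthogonality restriction `δᵀ · A · γ = 0`, where `δ` is the
weighted first-stage projection coefficient of the endogenous variable on the
instruments after partialling out the exogenous covariates. -/
theorem ivqr_first_stage_representation
    (k p r : ℕ) (hk : 1 ≤ k) (hp : 1 ≤ p) (hr : 1 ≤ r)
    (M_xx : Matrix (Fin k) (Fin k) ℝ) (hMxx_symm : M_xx.IsSymm)
    (hMxx_inv : IsUnit M_xx.det)
    (M_xz : Matrix (Fin k) (Fin p) ℝ)
    (M_zx : Matrix (Fin p) (Fin k) ℝ) (hMzx : M_zx = M_xzᵀ)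
    (M_zz : Matrix (Fin p) (Fin p) ℝ) (hMzz_symm : M_zz.IsSymm)
    (M_xd : Matrix (Fin k) (Fin r) ℝ) (M_zd : Matrix (Fin p) (Fin r) ℝ)
    (A : Matrix (Fin p) (Fin p) ℝ) (hA_symm : A.IsSymm)
    (S : Matrix (Fin p) (Fin p) ℝ) (hS : S = M_zz - M_zx * M_xx⁻¹ * M_xz)
    (hS_inv : IsUnit S.det)
    (lx : Matrix (Fin 1) (Fin k) ℝ) (lz : Matrix (Fin 1) (Fin p) ℝ)
    (γ : Matrix (Fin p) (Fin 1) ℝ)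
    (foc_alpha : lx * M_xd + lz * M_zd = 0)
    (foc_beta : lx * M_xx + lz * M_zx = 0)
    (foc_gamma : (2 : ℝ) • (γᵀ * A) = lx * M_xz + lz * M_zz)
    (δ : Matrix (Fin p) (Fin r) ℝ)
    (hδ : δ = S⁻¹ * (M_zd - M_zx * M_xx⁻¹ * M_xd)) :
    δᵀ * A * γ = 0 := by
  have hlx : lx = -(lz * M_zx) * M_xx⁻¹ := by
    have h1 : lx * M_xx = -(lz * M_zx) := by
      have := foc_beta
      linear_combination (norm := noncomm_ring) this
    calc lx = lx * M_xx * M_xx⁻¹ := by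
          rw [Matrix.mul_assoc, Matrix.mul_nonsing_inv _ hMxx_inv, Matrix.mul_one]
      _ = -(lz * M_zx) * M_xx⁻¹ := by rw [h1]
  have h2 : (2 : ℝ) • (γᵀ * A) = lz * S := by
    rw [foc_gamma, hlx, hS, Matrix.mul_sub]
    simp only [Matrix.neg_mul, Matrix.mul_assoc]
    abel
  have h3 : lz * S * δ = 0 := by
    rw [hδ, ← Matrix.mul_assoc, Matrix.mul_assoc lz S S⁻¹, Matrix.mul_nonsing_inv _ hS_inv,
      Matrix.mul_one, Matrix.mul_sub]
    have h4 : lz * M_zd = -(lx * M_xd) := by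
      linear_combination (norm := noncomm_ring) foc_alpha
    rw [h4, hlx]
    simp [Matrix.neg_mul, Matrix.mul_assoc]
  have h5 : γᵀ * A * δ = 0 := by
    have h6 : (2 : ℝ) • (γᵀ * A * δ) = 0 := by
      rw [← Matrix.smul_mul, h2, h3]
    have := smul_right_injective (Matrix (Fin 1) (Fin r) ℝ) (two_ne_zero (α := ℝ))
    exact this (by simpa using h6)
  have := congrArg Matrix.transpose h5
  simpa [Matrix.transpose_mul, Matrix.mul_assoc, hA_symm.eq] using this
end

section
/- Let (Ω, 𝓕, P) be a probability space, let u, e : Ω → ℝ be independent standard normal random variables (law gaussianReal 0 1), and let z : Ω → ℝ be a random variable taking only the values 0 and 1 with P(z = 1) = p̄ ∈ [0,1], such that z is independent of the pair (u, e). Let ρ ∈ (−1, 1), a ∈ ℝ and b ∈ ℝ with 1 + b ≠ 0, and define v := ρ·u + √(1−ρ²)·e and d := a·z + (1 + b·z)·v. Then the law of the pair (u, d) under P equals the measure on ℝ² with density (U, D) ↦ (1 − p̄)·φ₂(ρ; U, D) + p̄·(1/|1+b|)·φ₂(ρ; U, (D − a)/(1 + b)) with respect to two-dimensional Lebesgue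 measure, where φ₂(ρ; U, V) := (1/(2π√(1−ρ²))) · exp(−(U² − 2ρ·U·V + V²)/(2(1−ρ²))). -/
open MeasureTheory ProbabilityTheory
open scoped ENNReal

/-!
The pair `(u, v)` is the image of the standard Gaussian pair `(u, e)` under the shear
`(x, y) ↦ (x, ρ x + √(1 - ρ²) y)`, so by Fubini and a one-dimensional change of variables it
has density `φ₂`. On `{z = 1}` the variable `d = a + (1 + b) v` is a further shear of `(u, v)`,
with density `|1 + b|⁻¹ φ₂(x, (y - a)/(1 + b))`, while on `{z = 0}` simply `d = v`. Since `z` is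
independent of `(u, e)`, the law of `(u, d)` is the mixture of these two laws with weights
`P(z = 0) = 1 - p̄` and `P(z = 1) = p̄`.
-/

lemma lintegral_comp_const_add_mul {G : ℝ → ℝ≥0∞} (hG : Measurable G) (α : ℝ) {c : ℝ}
    (hc : c ≠ 0) :
    ∫⁻ y, G (α + c * y) = ENNReal.ofReal |c|⁻¹ * ∫⁻ w, G w := by
  have h_map : Measure.map (fun y : ℝ => α + c * y) volume = ENNReal.ofReal |c⁻¹| • volume := by
    change Measure.map ((α + ·) ∘ (c * ·)) volume = _
    rw [← Measure.map_map (measurable_const_add α) (measurable_const_mul c),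
      Real.map_volume_mul_left hc, Measure.map_smul, map_add_left_eq_self]
  rw [← lintegral_map hG (by fun_prop), h_map, lintegral_smul_measure, abs_inv, smul_eq_mul]

def shear (m : ℝ → ℝ) (c : ℝ) (p : ℝ × ℝ) : ℝ × ℝ := (p.1, m p.1 + c * p.2)

@[fun_prop]
lemma measurable_shear {m : ℝ → ℝ} (hm : Measurable m) (c : ℝ) : Measurable (shear m c) := by
  unfold shear; fun_prop

theorem map_shear_withDensity {f : ℝ × ℝ → ℝ≥0∞} (hf : Measurable f) {m : ℝ → ℝ}
    (hm : Measurable m) {c : ℝ} (hc : c ≠ 0) :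
    (volume.withDensity f).map (shear m c)
      = volume.withDensity fun q => ENNReal.ofReal |c|⁻¹ * f (q.1, (q.2 - m q.1) / c) := by
  refine Measure.ext_of_lintegral _ fun φ hφ => ?_
  -- Fubini, then the substitution `y ↦ m x + c y` in each vertical fibre.
  rw [lintegral_map hφ (measurable_shear hm c),
    lintegral_withDensity_eq_lintegral_mul _ hf (by fun_prop),
    lintegral_withDensity_eq_lintegral_mul _ (by fun_prop) hφ, Measure.volume_eq_prod,
    lintegral_prod _ (by fun_prop), lintegral_prod _ (by fun_prop)]
  refine lintegral_congr fun x => ?_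
  have hG : Measurable fun w => f (x, (w - m x) / c) * φ (x, w) := by fun_prop
  simp only [Pi.mul_apply, mul_assoc]
  rw [lintegral_const_mul _ hG, ← lintegral_comp_const_add_mul hG (m x) hc]
  simp only [shear, add_sub_cancel_left, mul_div_cancel_left₀ _ hc]

noncomputable def stdBivariateNormalPDF (ρ x y : ℝ) : ℝ :=
  (1 / (2 * Real.pi * Real.sqrt (1 - ρ ^ 2)))
    * Real.exp (-(x ^ 2 - 2 * ρ * x * y + y ^ 2) / (2 * (1 - ρ ^ 2)))

lemma stdBivariateNormalPDF_nonneg (ρ x y : ℝ) : 0 ≤ stdBivariateNormalPDF ρ x y := by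
  unfold stdBivariateNormalPDF; positivity

@[fun_prop]
lemma Measurable.stdBivariateNormalPDF {α : Type*} [MeasurableSpace α] {f g : α → ℝ}
    (hf : Measurable f) (hg : Measurable g) (ρ : ℝ) :
    Measurable fun x => stdBivariateNormalPDF ρ (f x) (g x) := by
  unfold _root_.stdBivariateNormalPDF; fun_prop

lemma gaussianPDFReal_mul_gaussianPDFReal_shear {ρ : ℝ} (hρ : ρ ^ 2 < 1) (x y : ℝ) :
    |Real.sqrt (1 - ρ ^ 2)|⁻¹ * (gaussianPDFReal 0 1 x
        * gaussianPDFReal 0 1 ((y - ρ * x) / Real.sqrt (1 - ρ ^ 2)))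
      = stdBivariateNormalPDF ρ x y := by
  have h1ρ : 0 < 1 - ρ ^ 2 := by linarith
  have hσ : 0 < Real.sqrt (1 - ρ ^ 2) := Real.sqrt_pos.mpr h1ρ
  have hσ_sq := Real.sq_sqrt h1ρ.le
  have hexp : -(x ^ 2) / 2 + -((y - ρ * x) / Real.sqrt (1 - ρ ^ 2)) ^ 2 / 2
      = -(x ^ 2 - 2 * ρ * x * y + y ^ 2) / (2 * (1 - ρ ^ 2)) := by
    rw [div_pow, hσ_sq]; field_simp; ring
  simp only [gaussianPDFReal, NNReal.coe_one, mul_one, sub_zero]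
  rw [stdBivariateNormalPDF, ← hexp, Real.exp_add, abs_of_pos hσ]
  field_simp
  exact (Real.sq_sqrt (by positivity)).symm

lemma stdGaussian_prod_map_shear {ρ : ℝ} (hρ : ρ ^ 2 < 1) :
    ((gaussianReal 0 1).prod (gaussianReal 0 1)).map (shear (ρ * ·) (Real.sqrt (1 - ρ ^ 2)))
      = volume.withDensity fun q => ENNReal.ofReal (stdBivariateNormalPDF ρ q.1 q.2) := by
  have hσ : Real.sqrt (1 - ρ ^ 2) ≠ 0 := (Real.sqrt_pos.mpr (by linarith)).ne'
  rw [gaussianReal_of_var_ne_zero 0 one_ne_zero, prod_withDensity (by fun_prop) (by fun_prop),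
    ← Measure.volume_eq_prod, map_shear_withDensity (by fun_prop) (by fun_prop) hσ]
  congr 1
  funext q
  simp only [gaussianPDF, ← ENNReal.ofReal_mul (gaussianPDFReal_nonneg 0 1 _),
    ← ENNReal.ofReal_mul (by positivity : (0:ℝ) ≤ |Real.sqrt (1 - ρ ^ 2)|⁻¹),
    gaussianPDFReal_mul_gaussianPDFReal_shear hρ]

theorem map_correlated_stdGaussian {Ω : Type*} [MeasurableSpace Ω] {P : Measure Ω}
    [IsFiniteMeasure P] {X Y : Ω → ℝ} (hX : Measurable X) (hY : Measurable Y) (hXY : IndepFun X Y P)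
    (hX_law : P.map X = gaussianReal 0 1) (hY_law : P.map Y = gaussianReal 0 1)
    {ρ : ℝ} (hρ : ρ ^ 2 < 1) :
    P.map (fun ω => (X ω, ρ * X ω + Real.sqrt (1 - ρ ^ 2) * Y ω))
      = volume.withDensity fun q => ENNReal.ofReal (stdBivariateNormalPDF ρ q.1 q.2) := by
  have h_joint : P.map (fun ω => (X ω, Y ω)) = (gaussianReal 0 1).prod (gaussianReal 0 1) := by
    rw [(indepFun_iff_map_prod_eq_prod_map_map hX.aemeasurable hY.aemeasurable).mp hXY,
      hX_law, hY_law]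
  rw [← stdGaussian_prod_map_shear hρ, ← h_joint, Measure.map_map (by fun_prop) (by fun_prop)]
  rfl

theorem map_eq_smul_map_add_smul_map_of_indepFun {Ω β : Type*} [MeasurableSpace Ω]
    [MeasurableSpace β] {P : Measure Ω} {X₀ X₁ Y : Ω → β} {z : Ω → ℝ}
    (hX₀ : Measurable X₀) (hX₁ : Measurable X₁) (hY : Measurable Y)
    (hz : Measurable z) (h₀ : IndepFun X₀ z P) (h₁ : IndepFun X₁ z P)
    (hz01 : ∀ ω, z ω = 0 ∨ z ω = 1)
    (hY₀ : ∀ ω, z ω = 0 → Y ω = X₀ ω) (hY₁ : ∀ ω, z ω = 1 → Y ω = X₁ ω) :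
    P.map Y = P (z ⁻¹' {0}) • P.map X₀ + P (z ⁻¹' {1}) • P.map X₁ := by
  ext t ht
  have h_split : Y ⁻¹' t = (X₀ ⁻¹' t ∩ z ⁻¹' {0}) ∪ (X₁ ⁻¹' t ∩ z ⁻¹' {1}) := by
    ext ω
    rcases hz01 ω with h | h <;> simp [h, hY₀, hY₁]
  have h_disj : Disjoint (X₀ ⁻¹' t ∩ z ⁻¹' {0}) (X₁ ⁻¹' t ∩ z ⁻¹' {1}) :=
    Set.disjoint_left.mpr fun ω h0 h1 => zero_ne_one (h0.2.symm.trans h1.2)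
  rw [Measure.map_apply hY ht, h_split,
    measure_union h_disj ((hX₁ ht).inter (hz (measurableSet_singleton 1))),
    h₀.measure_inter_preimage_eq_mul _ _ ht (measurableSet_singleton 0),
    h₁.measure_inter_preimage_eq_mul _ _ ht (measurableSet_singleton 1)]
  simp [Measure.map_apply hX₀ ht, Measure.map_apply hX₁ ht, mul_comm]

lemma measure_preimage_zero_eq_one_sub {Ω : Type*} [MeasurableSpace Ω] {P : Measure Ω}
    [IsProbabilityMeasure P] {z : Ω → ℝ} (hz : Measurable z) (hz01 : ∀ ω, z ω = 0 ∨ z ω = 1) :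
    P (z ⁻¹' {0}) = 1 - P (z ⁻¹' {1}) := by
  have h_compl : z ⁻¹' {0} = (z ⁻¹' {1})ᶜ := by
    ext ω
    rcases hz01 ω with h | h <;> simp [h]
  rw [h_compl, prob_compl_eq_one_sub (hz (measurableSet_singleton 1))]

lemma smul_withDensity_ofReal_add_smul_withDensity_ofReal {α : Type*} [MeasurableSpace α]
    (μ : Measure α) {f g : α → ℝ} (hf : Measurable f) (hg : Measurable g) (hf₀ : 0 ≤ f)
    (hg₀ : 0 ≤ g) {s t : ℝ} (hs : 0 ≤ s) (ht : 0 ≤ t) :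
    ENNReal.ofReal s • μ.withDensity (fun x => ENNReal.ofReal (f x))
        + ENNReal.ofReal t • μ.withDensity (fun x => ENNReal.ofReal (g x))
      = μ.withDensity fun x => ENNReal.ofReal (s * f x + t * g x) := by
  rw [← withDensity_smul _ hf.ennreal_ofReal, ← withDensity_smul _ hg.ennreal_ofReal,
    ← withDensity_add_left (hf.ennreal_ofReal.const_smul _)]
  congr 1
  funext x
  simp only [Pi.add_apply, Pi.smul_apply, smul_eq_mul]
  rw [ENNReal.ofReal_add (mul_nonneg hs (hf₀ x)) (mul_nonneg ht (hg₀ x)),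
    ENNReal.ofReal_mul hs, ENNReal.ofReal_mul ht]

/-- Example 3 (location-scale model 2) of Appendix B: with a binary instrument
`z ~ Bernoulli(p̄)` independent of the bivariate normal pair `(u, v)` with
correlation `ρ`, and first stage `d = az + (1 + bz)v`, the joint law of
`(u, d)` is the two-component Gaussian mixture with density
`(1−p̄)·φ₂(ρ; U, D) + p̄·(1/|1+b|)·φ₂(ρ; U, (D−a)/(1+b))` with respect to
two-dimensional Lebesgue measure. -/
theorem location_scale_binary_instrument_joint_law
    {Ω : Type*} [MeasurableSpace Ω] (P : Measure Ω) [IsProbabilityMeasure P]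
    (u e z : Ω → ℝ) (hu_meas : Measurable u) (he_meas : Measurable e)
    (hz_meas : Measurable z)
    (h_ue_indep : IndepFun u e P)
    (h_z_indep : IndepFun (fun ω => (u ω, e ω)) z P)
    (hu_law : Measure.map u P = gaussianReal 0 1)
    (he_law : Measure.map e P = gaussianReal 0 1)
    (hz_binary : ∀ ω, z ω = 0 ∨ z ω = 1)
    (pbar : ℝ) (hpbar : pbar ∈ Set.Icc (0 : ℝ) 1)
    (hz_prob : P {ω | z ω = 1} = ENNReal.ofReal pbar)
    (ρ : ℝ) (hρ : ρ ∈ Set.Ioo (-1 : ℝ) 1)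
    (a b : ℝ) (hb : 1 + b ≠ 0)
    (v d : Ω → ℝ)
    (hv : v = fun ω => ρ * u ω + Real.sqrt (1 - ρ ^ 2) * e ω)
    (hd : d = fun ω => a * z ω + (1 + b * z ω) * v ω)
    (φ₂ : ℝ → ℝ → ℝ)
    (hφ₂ : φ₂ = fun U V =>
      (1 / (2 * Real.pi * Real.sqrt (1 - ρ ^ 2)))
        * Real.exp (-(U ^ 2 - 2 * ρ * U * V + V ^ 2) / (2 * (1 - ρ ^ 2)))) :
    Measure.map (fun ω => (u ω, d ω)) P
      = (volume : Measure (ℝ × ℝ)).withDensity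
          (fun q => ENNReal.ofReal
            ((1 - pbar) * φ₂ q.1 q.2
              + pbar * (1 / |1 + b|) * φ₂ q.1 ((q.2 - a) / (1 + b)))) := by
  obtain rfl : φ₂ = stdBivariateNormalPDF ρ := hφ₂
  subst hv hd
  set σ := Real.sqrt (1 - ρ ^ 2)
  set A := shear (fun _ => a) (1 + b)
  have hA : Measurable A := measurable_shear measurable_const _
  have h_uv := map_correlated_stdGaussian hu_meas he_meas h_ue_indep hu_law he_law
    (by nlinarith [hρ.1, hρ.2] : ρ ^ 2 < 1)
  have h_uw : P.map (A ∘ fun ω => (u ω, ρ * u ω + σ * e ω))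
      = volume.withDensity fun q => ENNReal.ofReal
          (1 / |1 + b| * stdBivariateNormalPDF ρ q.1 ((q.2 - a) / (1 + b))) := by
    rw [← Measure.map_map hA (by fun_prop), h_uv,
      map_shear_withDensity (by fun_prop) measurable_const hb]
    simp_rw [one_div, ENNReal.ofReal_mul (inv_nonneg.mpr (abs_nonneg _))]
  have h_z1 : P (z ⁻¹' {1}) = ENNReal.ofReal pbar := hz_prob
  have h_z0 : P (z ⁻¹' {0}) = ENNReal.ofReal (1 - pbar) := by
    rw [measure_preimage_zero_eq_one_sub hz_meas hz_binary, h_z1, ENNReal.ofReal_sub _ hpbar.1,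
      ENNReal.ofReal_one]
  have h_indep : IndepFun (fun ω => (u ω, ρ * u ω + σ * e ω)) z P :=
    h_z_indep.comp (measurable_shear (measurable_const_mul ρ) σ) measurable_id
  have h_meas : Measurable fun q : ℝ × ℝ =>
      1 / |1 + b| * stdBivariateNormalPDF ρ q.1 ((q.2 - a) / (1 + b)) := by fun_prop
  rw [map_eq_smul_map_add_smul_map_of_indepFun (by fun_prop) (hA.comp (by fun_prop))
      (by fun_prop) hz_meas h_indep (h_indep.comp hA measurable_id) hz_binary
      (by simp +contextual) (by simp +contextual [A, shear]), h_z0, h_z1, h_uv, h_uw,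
    smul_withDensity_ofReal_add_smul_withDensity_ofReal _ (by fun_prop) h_meas
      (fun _ => stdBivariateNormalPDF_nonneg _ _ _)
      (fun _ => mul_nonneg (by positivity) (stdBivariateNormalPDF_nonneg _ _ _))
      (sub_nonneg.mpr hpbar.2) hpbar.1]
  simp_rw [mul_assoc]
end
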